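/- Fix N ≥ 1, m ≥ 1 and real numbers t₀ < T. Let H, h₁,…,h_m : ℝ^N × ℝ^N → ℝ be C², let ν₀,…,ν_m ∈ ℝ, and define the vector fields X(q,p) = ( ∇_pH(q,p), −∇_qH(q,p) − ν₀p ) and Y_i(q,p) = ( ∇_ph_i(q,p), −∇_qh_i(q,p) − ν_i p ) for i = 1,…,m. Let w : ℝ → ℝ^m be C¹ and let φ : [t₀,T] × (ℝ^N × ℝ^N) → ℝ^N × ℝ^N be C² with φ(t₀, z) = z for all z and ∂_tφ(t,z) = X(φ(t,z)) + Σ_{i=1}^m (wⁱ)'(t) Y_i(φ(t,z)) for all (t,z). Then for all t ∈ [t₀,T], all z ∈ ℝ^N × ℝ^N, and all u, v ∈ ℝ^N × ℝ^N: Ω( D_zφ(t,z)u, D_zφ(t,z)v ) = exp( −ν₀(t − t₀) − Σ_{i=1}^m ν_i ( wⁱ(t) − wⁱ(t₀) ) ) · Ω(u, v). (Smooth-noise, pathwise version of Theorem 2.3: the flow of the stochastic forced Hamiltonian system with forcing F = −ν₀p, f_i = −ν_i p is conformally symplectic with factor c_{t,t₀} = exp(−ν₀(t−t₀) − Σ_i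 ν_i(wⁱ(t)−wⁱ(t₀))).) -/

import Mathlib

/-!
Along a trajectory, `U t = D_zφ(t,z) u` solves the variational equation `U' = A_t U` with
`A_t = DX + ∑ ẇⁱ DY_i` evaluated at `φ(t,z)`; this is where the `C²` hypothesis on the flow
enters, through the symmetry of its second derivative. For a forced Hamiltonian field
`(∇_p K, -∇_q K - ν p)` the Hamiltonian part of the linearisation is `Ω`-skew because the
Hessian of `K` is symmetric, while the forcing contributes `-ν Ω`. Hence
`d/dt Ω(U, V) = -(ν₀ + ∑ νᵢ ẇⁱ) Ω(U, V)`, which integrates to the exponential factor.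
-/

noncomputable section
open scoped BigOperators

abbrev E (N : ℕ) : Type := EuclideanSpace ℝ (Fin N)

/-- Gradient with respect to the first argument. -/
noncomputable def D1 {N : ℕ} (H : E N × E N → ℝ) (x y : E N) : E N :=
  gradient (fun x' => H (x', y)) x

/-- Gradient with respect to the second argument. -/
noncomputable def D2 {N : ℕ} (H : E N × E N → ℝ) (x y : E N) : E N :=
  gradient (fun y' => H (x, y')) y

/-- The canonical symplectic bilinear form on `ℝ^N × ℝ^N`. -/
noncomputable def Omega {N : ℕ} (u v : E N × E N) : ℝ :=
  (inner ℝ u.1 v.2 : ℝ) - (inner ℝ u.2 v.1 : ℝ)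

open ContinuousLinearMap InnerProductSpace

section Omega

variable {N : ℕ}

@[simp] lemma Omega_add_left (a b v : E N × E N) : Omega (a + b) v = Omega a v + Omega b v := by
  simp only [Omega, Prod.fst_add, Prod.snd_add, inner_add_left]; ring

@[simp] lemma Omega_add_right (u a b : E N × E N) : Omega u (a + b) = Omega u a + Omega u b := by
  simp only [Omega, Prod.fst_add, Prod.snd_add, inner_add_right]; ring

@[simp] lemma Omega_smul_left (c : ℝ) (a v : E N × E N) : Omega (c • a) v = c * Omega a v := by
  simp only [Omega, Prod.smul_fst, Prod.smul_snd, real_inner_smul_left]; ring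

@[simp] lemma Omega_smul_right (c : ℝ) (u a : E N × E N) : Omega u (c • a) = c * Omega u a := by
  simp only [Omega, Prod.smul_fst, Prod.smul_snd, real_inner_smul_right]; ring

lemma HasDerivAt.Omega {U V : ℝ → E N × E N} {U' V' : E N × E N} {s : ℝ}
    (hU : HasDerivAt U U' s) (hV : HasDerivAt V V' s) :
    HasDerivAt (fun s => Omega (U s) (V s)) (Omega U' (V s) + Omega (U s) V') s := by
  have fst {W W'} (h : HasDerivAt W W' s) : HasDerivAt (fun s => (W s : E N × E N).1) W'.1 s :=
    (fst ℝ (E N) (E N)).hasFDerivAt.comp_hasDerivAt s h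
  have snd {W W'} (h : HasDerivAt W W' s) : HasDerivAt (fun s => (W s : E N × E N).2) W'.2 s :=
    (snd ℝ (E N) (E N)).hasFDerivAt.comp_hasDerivAt s h
  exact (((fst hU).inner ℝ (snd hV)).sub ((snd hU).inner ℝ (fst hV))).congr_deriv
    (by unfold _root_.Omega; ring)

end Omega

/-- `A` generates a flow that scales `Omega` by `exp (-c t)`. -/
def IsInfConformalSymplectic {N : ℕ} (c : ℝ) (A : (E N × E N) →L[ℝ] E N × E N) : Prop :=
  ∀ u v, Omega (A u) v + Omega u (A v) = -c * Omega u v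

namespace IsInfConformalSymplectic

variable {N : ℕ} {c d : ℝ} {A B : (E N × E N) →L[ℝ] E N × E N}

lemma zero : IsInfConformalSymplectic (N := N) 0 0 := fun u v => by simp [Omega]

lemma add (hA : IsInfConformalSymplectic c A) (hB : IsInfConformalSymplectic d B) :
    IsInfConformalSymplectic (c + d) (A + B) := fun u v => by
  simp only [add_apply, Omega_add_left, Omega_add_right]
  linear_combination hA u v + hB u v

lemma smul (r : ℝ) (hA : IsInfConformalSymplectic c A) :
    IsInfConformalSymplectic (r * c) (r • A) := fun u v => by
  simp only [smul_apply, Omega_smul_left, Omega_smul_right]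
  linear_combination r * hA u v

lemma sum {ι : Type*} (s : Finset ι) {c : ι → ℝ} {A : ι → (E N × E N) →L[ℝ] E N × E N}
    (r : ι → ℝ) (hA : ∀ i ∈ s, IsInfConformalSymplectic (c i) (A i)) :
    IsInfConformalSymplectic (∑ i ∈ s, r i * c i) (∑ i ∈ s, r i • A i) := by
  classical
  induction s using Finset.induction_on with
  | empty => simpa using zero
  | insert i s hi ih =>
    rw [Finset.sum_insert hi, Finset.sum_insert hi]
    exact ((hA i (s.mem_insert_self i)).smul (r i)).add
      (ih fun j hj => hA j (Finset.mem_insert_of_mem hj))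

end IsInfConformalSymplectic

section PartialGradient

variable (F G : Type*) [NormedAddCommGroup F] [InnerProductSpace ℝ F]
  [NormedAddCommGroup G] [InnerProductSpace ℝ G]

def gradFstCLM [CompleteSpace F] : (F × G →L[ℝ] ℝ) →L[ℝ] F :=
  (toDual ℝ F).symm.toContinuousLinearEquiv.toContinuousLinearMap ∘L
    (compL ℝ F (F × G) ℝ).flip (inl ℝ F G)

def gradSndCLM [CompleteSpace G] : (F × G →L[ℝ] ℝ) →L[ℝ] G :=
  (toDual ℝ G).symm.toContinuousLinearEquiv.toContinuousLinearMap ∘L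
    (compL ℝ G (F × G) ℝ).flip (inr ℝ F G)

variable {F G}

@[simp] lemma inner_gradFstCLM [CompleteSpace F] (L : F × G →L[ℝ] ℝ) (a : F) :
    inner ℝ (gradFstCLM F G L) a = L (a, 0) := by
  simp [gradFstCLM, toDual_symm_apply]

@[simp] lemma inner_gradSndCLM [CompleteSpace G] (L : F × G →L[ℝ] ℝ) (b : G) :
    inner ℝ (gradSndCLM F G L) b = L (0, b) := by
  simp [gradSndCLM, toDual_symm_apply]

end PartialGradient

section ForcedHamiltonianField

variable {N : ℕ} {K : E N × E N → ℝ}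

lemma D1_eq_gradFstCLM {z : E N × E N} (hK : DifferentiableAt ℝ K z) :
    D1 K z.1 z.2 = gradFstCLM (E N) (E N) (fderiv ℝ K z) := by
  have h : HasFDerivAt (fun q => K (q, z.2)) (fderiv ℝ K z ∘L inl ℝ (E N) (E N)) z.1 :=
    hK.hasFDerivAt.comp z.1 (hasFDerivAt_prodMk_left z.1 z.2)
  rw [D1, gradient, h.fderiv]
  rfl

lemma D2_eq_gradSndCLM {z : E N × E N} (hK : DifferentiableAt ℝ K z) :
    D2 K z.1 z.2 = gradSndCLM (E N) (E N) (fderiv ℝ K z) := by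
  have h : HasFDerivAt (fun p => K (z.1, p)) (fderiv ℝ K z ∘L inr ℝ (E N) (E N)) z.2 :=
    hK.hasFDerivAt.comp z.2 (hasFDerivAt_prodMk_right z.1 z.2)
  rw [D2, gradient, h.fderiv]
  rfl

def forcedHamiltonianField (K : E N × E N → ℝ) (ν : ℝ) (z : E N × E N) : E N × E N :=
  (D2 K z.1 z.2, -D1 K z.1 z.2 - ν • z.2)

lemma hasFDerivAt_forcedHamiltonianField (hK : ContDiff ℝ 2 K) (ν : ℝ) (z : E N × E N) :
    HasFDerivAt (forcedHamiltonianField K ν)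
      ((gradSndCLM (E N) (E N) ∘L fderiv ℝ (fderiv ℝ K) z).prod
        (-(gradFstCLM (E N) (E N) ∘L fderiv ℝ (fderiv ℝ K) z) - ν • snd ℝ (E N) (E N))) z := by
  have hK' : HasFDerivAt (fderiv ℝ K) (fderiv ℝ (fderiv ℝ K) z) z :=
    ((hK.fderiv_right (m := 1) (by norm_num)).differentiable one_ne_zero z).hasFDerivAt
  have hfield : forcedHamiltonianField K ν = fun z => (gradSndCLM (E N) (E N) (fderiv ℝ K z),
      -gradFstCLM (E N) (E N) (fderiv ℝ K z) - ν • z.2) := by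
    ext1 z
    have hKz := hK.differentiable two_ne_zero z
    rw [forcedHamiltonianField, D1_eq_gradFstCLM hKz, D2_eq_gradSndCLM hKz]
  rw [hfield]
  exact ((gradSndCLM _ _).hasFDerivAt.comp z hK').prodMk
    (((gradFstCLM _ _).hasFDerivAt.comp z hK').neg.sub (hasFDerivAt_snd.const_smul ν))

lemma differentiable_forcedHamiltonianField (hK : ContDiff ℝ 2 K) (ν : ℝ) :
    Differentiable ℝ (forcedHamiltonianField K ν) := fun z =>
  (hasFDerivAt_forcedHamiltonianField hK ν z).differentiableAt

lemma isInfConformalSymplectic_fderiv_forcedHamiltonianField (hK : ContDiff ℝ 2 K) (ν : ℝ)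
    (z : E N × E N) :
    IsInfConformalSymplectic ν (fderiv ℝ (forcedHamiltonianField K ν) z) := by
  intro u v
  rw [(hasFDerivAt_forcedHamiltonianField hK ν z).fderiv]
  set B := fderiv ℝ (fderiv ℝ K) z
  have hB : B u v = B v u := (hK.contDiffAt.isSymmSndFDerivAt (by simp)).eq u v
  have hsplit (a w : E N × E N) : B a w = B a (w.1, 0) + B a (0, w.2) := by
    rw [← map_add, Prod.mk_add_mk, add_zero, zero_add]
  simp only [Omega, prod_apply, coe_comp, Function.comp_apply, sub_apply, neg_apply, smul_apply,
    coe_snd', inner_sub_left, inner_neg_left, real_inner_smul_left, inner_gradFstCLM,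
    inner_gradSndCLM, real_inner_comm _ u.1, real_inner_comm _ u.2]
  linear_combination hB - hsplit u v + hsplit v u

end ForcedHamiltonianField

section Flow

variable {V : Type*} [NormedAddCommGroup V] [NormedSpace ℝ V]

theorem hasDerivAt_fderiv_flow {φ : ℝ → V → V} {Z : ℝ → V → V} {s : ℝ} {z : V}
    (hφ : ContDiff ℝ 2 (fun p : ℝ × V => φ p.1 p.2))
    (hZ : DifferentiableAt ℝ (Z s) (φ s z))
    (hφZ : ∀ y, HasDerivAt (fun t => φ t y) (Z s (φ s y)) s) :
    HasDerivAt (fun t => fderiv ℝ (φ t) z) (fderiv ℝ (Z s) (φ s z) ∘L fderiv ℝ (φ s) z) s := by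
  set F : ℝ × V → V := fun p => φ p.1 p.2
  have hF : Differentiable ℝ F := hφ.differentiable two_ne_zero
  have hF' : Differentiable ℝ (fderiv ℝ F) :=
    (hφ.fderiv_right (m := 1) (by norm_num)).differentiable one_ne_zero
  have hslice (t : ℝ) (y : V) : fderiv ℝ (φ t) y = fderiv ℝ F (t, y) ∘L inr ℝ ℝ V :=
    ((hF (t, y)).hasFDerivAt.comp y (hasFDerivAt_prodMk_right t y)).fderiv
  have htime (y : V) : fderiv ℝ F (s, y) (1, 0) = Z s (φ s y) := by
    have h := (hF (s, y)).hasFDerivAt.comp_hasDerivAt s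
      ((hasDerivAt_id' s).prodMk (hasDerivAt_const s y))
    exact h.unique (hφZ y)
  have hsymm : IsSymmSndFDerivAt ℝ F (s, z) := hφ.contDiffAt.isSymmSndFDerivAt (by simp)
  -- the time derivative of `D_z φ` is `D²F (1, 0) (0, ·)`, which by symmetry is the spatial
  -- derivative of `∂_t φ = Z s ∘ φ s`
  have hmixed : fderiv ℝ (fderiv ℝ F) (s, z) (1, 0) ∘L inr ℝ ℝ V
      = fderiv ℝ (Z s) (φ s z) ∘L fderiv ℝ F (s, z) ∘L inr ℝ ℝ V := by
    have hleft : HasFDerivAt (fun y => fderiv ℝ F (s, y) (1, 0))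
        ((apply ℝ V ((1 : ℝ), (0 : V)) ∘L fderiv ℝ (fderiv ℝ F) (s, z)) ∘L inr ℝ ℝ V) z :=
      ((apply ℝ V ((1 : ℝ), (0 : V))).hasFDerivAt.comp (s, z) (hF' (s, z)).hasFDerivAt).comp z
        (hasFDerivAt_prodMk_right s z)
    have hright : HasFDerivAt (fun y => Z s (φ s y))
        (fderiv ℝ (Z s) (φ s z) ∘L fderiv ℝ F (s, z) ∘L inr ℝ ℝ V) z :=
      hZ.hasFDerivAt.comp z ((hF (s, z)).hasFDerivAt.comp z (hasFDerivAt_prodMk_right s z))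
    ext1 a
    rw [← (hleft.congr_of_eventuallyEq (.of_forall fun y => (htime y).symm)).unique hright]
    exact hsymm (1, 0) (0, a)
  rw [funext (hslice · z), hslice, ← hmixed]
  have hcurve : HasDerivAt (fun t => fderiv ℝ F (t, z)) (fderiv ℝ (fderiv ℝ F) (s, z) (1, 0)) s :=
    (hF' (s, z)).hasFDerivAt.comp_hasDerivAt s ((hasDerivAt_id' s).prodMk (hasDerivAt_const s z))
  simpa using hcurve.clm_comp (hasDerivAt_const s (inr ℝ ℝ V))

end Flow

theorem eq_exp_mul_of_hasDerivAt_eq_neg_mul {a b : ℝ} {g γ γ' : ℝ → ℝ}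
    (hγ : ∀ s ∈ Set.Icc a b, HasDerivAt γ (γ' s) s)
    (hg : ∀ s ∈ Set.Icc a b, HasDerivAt g (-γ' s * g s) s) :
    ∀ t ∈ Set.Icc a b, g t = Real.exp (-(γ t - γ a)) * g a := by
  have hconst : ∀ s ∈ Set.Icc a b, HasDerivAt (fun s => Real.exp (γ s) * g s) 0 s := fun s hs =>
    (((hγ s hs).exp.mul (hg s hs))).congr_deriv (by ring)
  have hcont : ContinuousOn (fun s => Real.exp (γ s) * g s) (Set.Icc a b) := fun s hs =>
    (hconst s hs).continuousAt.continuousWithinAt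
  intro t ht
  have h := constant_of_has_deriv_right_zero hcont
    (fun s hs => (hconst s (Set.Ico_subset_Icc_self hs)).hasDerivWithinAt) t ht
  rw [neg_sub, Real.exp_sub, div_mul_eq_mul_div, ← h, mul_div_cancel_left₀ _ (Real.exp_ne_zero _)]

theorem Omega_eq_exp_mul_of_hasDerivAt {N : ℕ} {a b : ℝ} {γ γ' : ℝ → ℝ}
    {A : ℝ → (E N × E N) →L[ℝ] E N × E N} {U V : ℝ → E N × E N}
    (hγ : ∀ s ∈ Set.Icc a b, HasDerivAt γ (γ' s) s)
    (hA : ∀ s ∈ Set.Icc a b, IsInfConformalSymplectic (γ' s) (A s))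
    (hU : ∀ s ∈ Set.Icc a b, HasDerivAt U (A s (U s)) s)
    (hV : ∀ s ∈ Set.Icc a b, HasDerivAt V (A s (V s)) s) :
    ∀ t ∈ Set.Icc a b, Omega (U t) (V t) = Real.exp (-(γ t - γ a)) * Omega (U a) (V a) :=
  eq_exp_mul_of_hasDerivAt_eq_neg_mul hγ fun s hs =>
    ((hU s hs).Omega (hV s hs)).congr_deriv (hA s hs (U s) (V s))

theorem conformal_symplecticity_pathwise_general
    {N m : ℕ}
    {t₀ T : ℝ}
    (H : E N × E N → ℝ) (h : Fin m → E N × E N → ℝ)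
    (hH : ContDiff ℝ 2 H) (hh : ∀ i, ContDiff ℝ 2 (h i))
    (ν₀ : ℝ) (ν : Fin m → ℝ)
    -- the drift and noise vector fields:
    (X : E N × E N → E N × E N)
    (hX : ∀ z : E N × E N, X z = (D2 H z.1 z.2, -D1 H z.1 z.2 - ν₀ • z.2))
    (Y : Fin m → E N × E N → E N × E N)
    (hY : ∀ i, ∀ z : E N × E N, Y i z = (D2 (h i) z.1 z.2, -D1 (h i) z.1 z.2 - ν i • z.2))
    -- the smooth noise path:
    (w : Fin m → ℝ → ℝ) (hw : ∀ i, ContDiff ℝ 1 (w i))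
    -- the flow map:
    (φ : ℝ → E N × E N → E N × E N)
    (hφC2 : ContDiff ℝ 2 (fun tz : ℝ × (E N × E N) => φ tz.1 tz.2))
    (hφ0 : ∀ z : E N × E N, φ t₀ z = z)
    (hφ : ∀ z : E N × E N, ∀ t ∈ Set.Icc t₀ T,
        HasDerivAt (fun t' => φ t' z)
          (X (φ t z) + ∑ i, deriv (w i) t • Y i (φ t z)) t) :
    ∀ t ∈ Set.Icc t₀ T, ∀ (z u v : E N × E N),
      Omega (fderiv ℝ (φ t) z u) (fderiv ℝ (φ t) z v)
        = Real.exp (-ν₀ * (t - t₀) - ∑ i, ν i * (w i t - w i t₀)) * Omega u v := by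
  intro t ht z u v
  obtain rfl : X = forcedHamiltonianField H ν₀ := funext hX
  obtain rfl : Y = fun i => forcedHamiltonianField (h i) (ν i) := funext₂ hY
  beta_reduce at hφ
  set Z : ℝ → E N × E N → E N × E N := fun s y =>
    forcedHamiltonianField H ν₀ y + ∑ i, deriv (w i) s • forcedHamiltonianField (h i) (ν i) y
  have hZ (s : ℝ) (y : E N × E N) : HasFDerivAt (Z s) (fderiv ℝ (forcedHamiltonianField H ν₀) y
      + ∑ i, deriv (w i) s • fderiv ℝ (forcedHamiltonianField (h i) (ν i)) y) y :=
    (differentiable_forcedHamiltonianField hH ν₀ y).hasFDerivAt.add <| HasFDerivAt.fun_sum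
      fun i _ => (differentiable_forcedHamiltonianField (hh i) (ν i) y).hasFDerivAt.const_smul
        (deriv (w i) s)
  have hconf (s : ℝ) (y : E N × E N) :
      IsInfConformalSymplectic (ν₀ + ∑ i, deriv (w i) s * ν i) (fderiv ℝ (Z s) y) := by
    rw [(hZ s y).fderiv]
    exact (isInfConformalSymplectic_fderiv_forcedHamiltonianField hH ν₀ y).add <|
      .sum _ _ fun i _ => isInfConformalSymplectic_fderiv_forcedHamiltonianField (hh i) (ν i) y
  have hγ (s : ℝ) : HasDerivAt (fun s => ν₀ * s + ∑ i, w i s * ν i)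
      (ν₀ + ∑ i, deriv (w i) s * ν i) s := by
    refine (((hasDerivAt_id' s).const_mul ν₀).add <| HasDerivAt.fun_sum fun i _ =>
      (((hw i).differentiable one_ne_zero s).hasDerivAt).mul_const (ν i)).congr_deriv ?_
    rw [mul_one]
  have hDφ (a : E N × E N) (s : ℝ) (hs : s ∈ Set.Icc t₀ T) :
      HasDerivAt (fun s => fderiv ℝ (φ s) z a) (fderiv ℝ (Z s) (φ s z) (fderiv ℝ (φ s) z a)) s := by
    simpa using (hasDerivAt_fderiv_flow hφC2 (hZ s _).differentiableAt
      (fun y => hφ y s hs)).clm_apply (hasDerivAt_const s a)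
  have hΩ := Omega_eq_exp_mul_of_hasDerivAt (fun s _ => hγ s) (fun s _ => hconf s _)
    (hDφ u) (hDφ v) t ht
  rw [hΩ, funext hφ0, fderiv_fun_id]
  congr 2
  simp only [mul_sub, Finset.sum_sub_distrib, mul_comm (w _ _)]
  ring

theorem conformal_symplecticity_pathwise
    {N m : ℕ} (hN : 1 ≤ N) (hm : 1 ≤ m)
    {t₀ T : ℝ} (ht : t₀ < T)
    (H : E N × E N → ℝ) (h : Fin m → E N × E N → ℝ)
    (hH : ContDiff ℝ 2 H) (hh : ∀ i, ContDiff ℝ 2 (h i))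
    (ν₀ : ℝ) (ν : Fin m → ℝ)
    -- the drift and noise vector fields:
    (X : E N × E N → E N × E N)
    (hX : ∀ z : E N × E N, X z = (D2 H z.1 z.2, -D1 H z.1 z.2 - ν₀ • z.2))
    (Y : Fin m → E N × E N → E N × E N)
    (hY : ∀ i, ∀ z : E N × E N, Y i z = (D2 (h i) z.1 z.2, -D1 (h i) z.1 z.2 - ν i • z.2))
    -- the smooth noise path:
    (w : Fin m → ℝ → ℝ) (hw : ∀ i, ContDiff ℝ 1 (w i))
    -- the flow map:
    (φ : ℝ → E N × E N → E N × E N)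
    (hφC2 : ContDiff ℝ 2 (fun tz : ℝ × (E N × E N) => φ tz.1 tz.2))
    (hφ0 : ∀ z : E N × E N, φ t₀ z = z)
    (hφ : ∀ z : E N × E N, ∀ t ∈ Set.Icc t₀ T,
        HasDerivAt (fun t' => φ t' z)
          (X (φ t z) + ∑ i, deriv (w i) t • Y i (φ t z)) t) :
    ∀ t ∈ Set.Icc t₀ T, ∀ (z u v : E N × E N),
      Omega (fderiv ℝ (φ t) z u) (fderiv ℝ (φ t) z v)
        = Real.exp (-ν₀ * (t - t₀) - ∑ i, ν i * (w i t - w i t₀)) * Omega u v :=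
  conformal_symplecticity_pathwise_general H h hH hh ν₀ ν X hX Y hY w hw φ hφC2 hφ0 hφ
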